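/- ⟨2^{2n}⟩ is a transduct of ⟨2^n⟩ (select every second block), but ⟨2^n⟩ is not a transduct of ⟨2^{2n}⟩ (i.e., ⟨4^n⟩ ≱ ⟨2^n⟩); hence ⟨2^n⟩ > ⟨2^{2n}⟩ strictly in the transducibility order. -/

import Mathlib

/-- A complete deterministic finite-state transducer over alphabet `{0,1}`
(represented by `Bool`). -/
structure FST where
  Q : Type
  fin : Fintype Q
  q0 : Q
  step : Q → Bool → Q
  out : Q → Bool → List Bool

/-- The state of `T` after reading the first `n` letters of `σ`. -/
def FST.stateAt (T : FST) (σ : ℕ → Bool) : ℕ → T.Q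
  | 0 => T.q0
  | n + 1 => T.step (T.stateAt σ n) (σ n)

/-- The output produced by `T` after reading the first `n` letters of `σ`. -/
def FST.outPrefix (T : FST) (σ : ℕ → Bool) (n : ℕ) : List Bool :=
  ((List.range n).map fun i => T.out (T.stateAt σ i) (σ i)).flatten

/-- `T` transduces the infinite sequence `σ` to the infinite sequence `τ`:
the outputs grow unboundedly and each finite output is a prefix of `τ`. -/
def FST.Transduces (T : FST) (σ τ : ℕ → Bool) : Prop :=
  Filter.Tendsto (fun n => (T.outPrefix σ n).length) Filter.atTop Filter.atTop ∧
  ∀ n j, j < (T.outPrefix σ n).length → (T.outPrefix σ n).getD j false = τ j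

/-- `σ ≥ τ`: some FST transduces `σ` to `τ`. -/
def Ge (σ τ : ℕ → Bool) : Prop := ∃ T : FST, T.Transduces σ τ
/-- `⟨f⟩ = 1 0^(f 0) 1 0^(f 1) 1 0^(f 2) ⋯` as an infinite binary sequence:
position `n` holds `1` (= `true`) iff `n = k + f 0 + ⋯ + f (k-1)` for some `k`. -/
def seqOf (f : ℕ → ℕ) : ℕ → Bool :=
  fun n => (List.range (n + 1)).any fun k =>
    decide (k + ∑ i ∈ Finset.range k, f i = n)


def posF (f : ℕ → ℕ) (k : ℕ) : ℕ := k + ∑ i ∈ Finset.range k, f i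

lemma posF_zero (f : ℕ → ℕ) : posF f 0 = 0 := by simp [posF]

lemma posF_succ (f : ℕ → ℕ) (k : ℕ) : posF f (k+1) = posF f k + 1 + f k := by
  simp [posF, Finset.sum_range_succ]; ring

lemma posF_strictMono (f : ℕ → ℕ) : StrictMono (posF f) :=
  strictMono_nat_of_lt_succ (fun k => by rw [posF_succ]; omega)

lemma self_le_posF (f : ℕ → ℕ) (k : ℕ) : k ≤ posF f k := Nat.le_add_right _ _

lemma seqOf_true_iff (f : ℕ → ℕ) (n : ℕ) : seqOf f n = true ↔ ∃ k, posF f k = n := by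
  simp only [seqOf, List.any_eq_true, List.mem_range, decide_eq_true_eq]
  constructor
  · rintro ⟨k, -, hk⟩; exact ⟨k, hk⟩
  · rintro ⟨k, hk⟩
    exact ⟨k, by have := self_le_posF f k; omega, hk⟩

lemma seqOf_posF (f : ℕ → ℕ) (k : ℕ) : seqOf f (posF f k) = true :=
  (seqOf_true_iff f _).2 ⟨k, rfl⟩

lemma seqOf_false {f : ℕ → ℕ} {k n : ℕ} (h1 : posF f k < n) (h2 : n < posF f (k+1)) :
    seqOf f n = false := by
  rw [← Bool.not_eq_true, seqOf_true_iff]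
  rintro ⟨j, hj⟩
  rcases lt_or_ge j (k+1) with h | h
  · have := (posF_strictMono f).monotone (Nat.lt_succ_iff.1 h); omega
  · have := (posF_strictMono f).monotone h; omega

lemma exists_block (f : ℕ → ℕ) (n : ℕ) : ∃ k, posF f k ≤ n ∧ n < posF f (k+1) := by
  induction n with
  | zero => exact ⟨0, by simp [posF_zero], by have := posF_strictMono f (Nat.lt_succ_self 0); simp [posF_zero] at this ⊢; omega⟩
  | succ n ih =>
    obtain ⟨k, h1, h2⟩ := ih
    rcases lt_or_ge (n+1) (posF f (k+1)) with h | h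
    · exact ⟨k, by omega, h⟩
    · exact ⟨k+1, h, by have := posF_strictMono f (show k+1 < k+1+1 by omega); omega⟩

lemma sum_two_pow (m : ℕ) : (∑ i ∈ Finset.range m, 2 ^ i) + 1 = 2 ^ m := by
  induction m with
  | zero => simp
  | succ m ih => rw [Finset.sum_range_succ, pow_succ]; omega



lemma outPrefix_succ (T : FST) (σ : ℕ → Bool) (n : ℕ) :
    T.outPrefix σ (n+1) = T.outPrefix σ n ++ T.out (T.stateAt σ n) (σ n) := by
  simp [FST.outPrefix, List.range_succ]

lemma outPrefix_prefix (T : FST) (σ : ℕ → Bool) {n m : ℕ} (h : n ≤ m) :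
    T.outPrefix σ n <+: T.outPrefix σ m := by
  induction m with
  | zero => simp_all
  | succ m ih =>
    rcases eq_or_lt_of_le h with h' | h'
    · exact h' ▸ List.prefix_refl _
    · exact (ih (Nat.lt_succ_iff.1 h')).trans
        (by rw [outPrefix_succ]; exact List.prefix_append _ _)
  
lemma length_outPrefix_mono (T : FST) (σ : ℕ → Bool) {n m : ℕ} (h : n ≤ m) :
    (T.outPrefix σ n).length ≤ (T.outPrefix σ m).length :=
  (outPrefix_prefix T σ h).length_le

lemma getD_of_prefix {l₁ l₂ : List Bool} (h : l₁ <+: l₂) {j : ℕ} (hj : j < l₁.length) :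
    l₂.getD j false = l₁.getD j false := by
  obtain ⟨t, rfl⟩ := h
  exact List.getD_append _ _ _ _ hj

lemma getD_map_range {F : ℕ → Bool} {L j : ℕ} (hj : j < L) :
    (((List.range L).map F).getD j false) = F j := by
  rw [List.getD_eq_getElem?_getD]
  simp [List.getElem?_map, List.getElem?_range hj]

lemma length_outPrefix_le (T : FST) (σ : ℕ → Bool) {D : ℕ}
    (hD : ∀ q b, (T.out q b).length ≤ D) (n j : ℕ) :
    (T.outPrefix σ (n + j)).length ≤ (T.outPrefix σ n).length + D * j := by
  induction j with
  | zero => simp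
  | succ j ih =>
    rw [show n + (j+1) = (n+j)+1 by ring, outPrefix_succ]
    simp only [List.length_append]
    have := hD (T.stateAt σ (n+j)) (σ (n+j))
    have : D * (j+1) = D * j + D := by ring
    omega



namespace TwoPow

/-! ### Positive direction -/

def T2 : FST where
  Q := Bool
  fin := inferInstance
  q0 := false
  step := fun q b => xor q b
  out := fun q b => if b then (if q then [] else [true]) else (if q then [false] else [])

lemma block_struct (g : ℕ → ℕ) (m : ℕ) :
    (List.range (posF g (m+1))).map (seqOf g)
      = (List.range (posF g m)).map (seqOf g) ++ true :: List.replicate (g m) false := by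
  rw [posF_succ, show posF g m + 1 + g m = posF g m + (g m + 1) by ring, List.range_add,
    List.map_append]
  congr 1
  rw [List.map_map, List.range_succ_eq_map, List.map_cons, List.map_map]
  congr 1
  · simpa using seqOf_posF g m
  · rw [List.eq_replicate_iff]
    refine ⟨by simp, ?_⟩
    intro b hb
    simp only [List.mem_map, List.mem_range, Function.comp] at hb
    obtain ⟨i, hi, rfl⟩ := hb
    exact seqOf_false (k := m) (by omega) (by rw [posF_succ]; omega)

lemma pos_inner (f : ℕ → ℕ) (k : ℕ)
    (hstate : T2.stateAt (seqOf f) (posF f k) = decide (k % 2 = 1)) (j : ℕ) (hj : j ≤ f k) :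
    T2.stateAt (seqOf f) (posF f k + 1 + j) = decide ((k+1) % 2 = 1) ∧
    T2.outPrefix (seqOf f) (posF f k + 1 + j)
      = T2.outPrefix (seqOf f) (posF f k)
        ++ (if k % 2 = 0 then true :: List.replicate j false else []) := by
  induction j with
  | zero =>
    have hpos : seqOf f (posF f k) = true := seqOf_posF f k
    have hst : T2.stateAt (seqOf f) (posF f k + 1)
        = T2.step (T2.stateAt (seqOf f) (posF f k)) (seqOf f (posF f k)) := rfl
    have hout : T2.outPrefix (seqOf f) (posF f k + 1)
        = T2.outPrefix (seqOf f) (posF f k)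
          ++ T2.out (T2.stateAt (seqOf f) (posF f k)) (seqOf f (posF f k)) :=
      outPrefix_succ _ _ _
    rcases Nat.mod_two_eq_zero_or_one k with h | h
    · have h1 : (k+1) % 2 = 1 := by omega
      constructor
      · rw [show posF f k + 1 + 0 = posF f k + 1 by ring, hst, hpos, hstate, h, h1]
        simp [T2]
      · rw [show posF f k + 1 + 0 = posF f k + 1 by ring, hout, hpos, hstate, h]
        simp [T2]
    · have h1 : (k+1) % 2 = 0 := by omega
      constructor
      · rw [show posF f k + 1 + 0 = posF f k + 1 by ring, hst, hpos, hstate, h, h1]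
        simp [T2]
      · rw [show posF f k + 1 + 0 = posF f k + 1 by ring, hout, hpos, hstate, h]
        simp [T2]
  | succ j ih =>
    obtain ⟨ih1, ih2⟩ := ih (by omega)
    have hzero : seqOf f (posF f k + 1 + j) = false := by
      refine seqOf_false (k := k) (by omega) ?_
      rw [posF_succ]; omega
    have hst : T2.stateAt (seqOf f) (posF f k + 1 + (j+1))
        = T2.step (T2.stateAt (seqOf f) (posF f k + 1 + j)) (seqOf f (posF f k + 1 + j)) := rfl
    have hout : T2.outPrefix (seqOf f) (posF f k + 1 + (j+1))
        = T2.outPrefix (seqOf f) (posF f k + 1 + j)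
          ++ T2.out (T2.stateAt (seqOf f) (posF f k + 1 + j)) (seqOf f (posF f k + 1 + j)) := by
      rw [show posF f k + 1 + (j+1) = (posF f k + 1 + j) + 1 by ring]
      exact outPrefix_succ _ _ _
    rcases Nat.mod_two_eq_zero_or_one k with h | h
    · have h1 : (k+1) % 2 = 1 := by omega
      refine ⟨by rw [hst, hzero, ih1, h1]; simp [T2], ?_⟩
      rw [hout, hzero, ih1, ih2, h1, h]
      simp [T2, List.replicate_succ', List.append_assoc]
    · have h1 : (k+1) % 2 = 0 := by omega
      refine ⟨by rw [hst, hzero, ih1, h1]; simp [T2], ?_⟩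
      rw [hout, hzero, ih1, ih2, h1, h]
      simp [T2]

lemma pos_main (f : ℕ → ℕ) (k : ℕ) :
    T2.stateAt (seqOf f) (posF f k) = decide (k % 2 = 1) ∧
    T2.outPrefix (seqOf f) (posF f k)
      = (List.range (posF (fun m => f (2*m)) ((k+1)/2))).map (seqOf (fun m => f (2*m))) := by
  induction k with
  | zero =>
    constructor
    · rw [posF_zero]; rfl
    · rw [posF_zero]; simp [FST.outPrefix, posF_zero]
  | succ k ih =>
    obtain ⟨ih1, ih2⟩ := ih
    obtain ⟨h1, h2⟩ := pos_inner f k ih1 (f k) le_rfl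
    have hpos : posF f k + 1 + f k = posF f (k+1) := (posF_succ f k).symm
    rw [hpos] at h1 h2
    refine ⟨h1, ?_⟩
    rcases Nat.mod_two_eq_zero_or_one k with h | h
    · have hk : k = 2 * (k / 2) := by omega
      have hdiv1 : (k+1)/2 = k/2 := by omega
      have hdiv2 : (k+1+1)/2 = k/2 + 1 := by omega
      rw [h2, ih2, if_pos h, hdiv1, hdiv2, block_struct]
      rw [← hk]
    · have hdiv : (k+1+1)/2 = (k+1)/2 := by omega
      rw [h2, ih2, if_neg (by omega), hdiv, List.append_nil]

lemma ge_double (f : ℕ → ℕ) : Ge (seqOf f) (seqOf (fun k => f (2*k))) := by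
  refine ⟨T2, ?_, ?_⟩
  · rw [Filter.tendsto_atTop]
    intro b
    rw [Filter.eventually_atTop]
    refine ⟨posF f (2*b), fun n hn => ?_⟩
    have h2 := (pos_main f (2*b)).2
    have hlen : (T2.outPrefix (seqOf f) (posF f (2*b))).length
        = posF (fun m => f (2*m)) b := by
      rw [h2]; simp; congr 1; omega
    calc b ≤ posF (fun m => f (2*m)) b := self_le_posF _ _
    _ = (T2.outPrefix (seqOf f) (posF f (2*b))).length := hlen.symm
    _ ≤ _ := length_outPrefix_mono _ _ hn
  · intro n j hj
    have hpre := outPrefix_prefix T2 (seqOf f) (self_le_posF f n)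
    have hj2 : j < (T2.outPrefix (seqOf f) (posF f n)).length :=
      lt_of_lt_of_le hj hpre.length_le
    rw [← getD_of_prefix hpre hj, (pos_main f n).2]
    rw [(pos_main f n).2] at hj2
    simp only [List.length_map, List.length_range] at hj2
    exact getD_map_range hj2

end TwoPow

namespace TwoPow

/-! ### Negative direction: machinery -/

def psi (T : FST) : T.Q → T.Q := fun q => T.step q false

/-- Number of states. -/
def Ncard (T : FST) : ℕ := @Fintype.card T.Q T.fin

def outsZ (T : FST) (q : T.Q) (a : ℕ) : List Bool :=
  ((List.range a).map fun i => T.out ((psi T)^[i] q) false).flatten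

lemma outsZ_succ (T : FST) (q : T.Q) (a : ℕ) :
    outsZ T q (a+1) = outsZ T q a ++ T.out ((psi T)^[a] q) false := by
  simp [outsZ, List.range_succ]

lemma outsZ_add (T : FST) (q : T.Q) (a b : ℕ) :
    outsZ T q (a+b) = outsZ T q a ++ outsZ T ((psi T)^[a] q) b := by
  induction b with
  | zero => simp [outsZ]
  | succ b ih =>
    rw [show a + (b+1) = (a+b)+1 by ring, outsZ_succ, ih, outsZ_succ, List.append_assoc]
    congr 3
    rw [show a + b = b + a by ring, Function.iterate_add_apply]

lemma outsZ_length_mono (T : FST) (q : T.Q) {a b : ℕ} (h : a ≤ b) :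
    (outsZ T q a).length ≤ (outsZ T q b).length := by
  obtain ⟨e, rfl⟩ := Nat.exists_eq_add_of_le h
  rw [outsZ_add]; simp

lemma outsZ_length_le (T : FST) (q : T.Q) {D : ℕ}
    (hD : ∀ q b, (T.out q b).length ≤ D) (a : ℕ) :
    (outsZ T q a).length ≤ D * a := by
  induction a with
  | zero => simp [outsZ]
  | succ a ih =>
    rw [outsZ_succ]
    have := hD ((psi T)^[a] q) false
    simp only [List.length_append]
    have : D * (a+1) = D * a + D := by ring
    omega

lemma iterate_fix_mul {α : Type*} {ψ : α → α} {p : ℕ} {u : α} (h : ψ^[p] u = u) (t : ℕ) :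
    ψ^[t * p] u = u := by
  rw [mul_comm, Function.iterate_mul]
  exact Function.iterate_fixed h t

lemma outsZ_cycle_len (T : FST) {p : ℕ} {u : T.Q} (h : (psi T)^[p] u = u) (t : ℕ) :
    (outsZ T u (t * p)).length = t * (outsZ T u p).length := by
  induction t with
  | zero => simp [outsZ]
  | succ t ih =>
    rw [show (t+1)*p = t*p + p by ring, outsZ_add, iterate_fix_mul h, List.length_append, ih]
    ring

lemma mem_outsZ {T : FST} {q : T.Q} {a : ℕ} {x : Bool} :
    x ∈ outsZ T q a ↔ ∃ i < a, x ∈ T.out ((psi T)^[i] q) false := by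
  simp only [outsZ, List.mem_flatten, List.mem_map, List.mem_range]
  constructor
  · rintro ⟨l, ⟨i, hi, rfl⟩, hx⟩; exact ⟨i, hi, hx⟩
  · rintro ⟨i, hi, hx⟩; exact ⟨_, ⟨i, hi, rfl⟩, hx⟩

lemma cycle_exists (T : FST) (q : T.Q) :
    ∃ p, 1 ≤ p ∧ p ≤ Ncard T ∧
      (psi T)^[p] ((psi T)^[Ncard T] q) = (psi T)^[Ncard T] q := by
  letI := T.fin
  have hNc : (Finset.univ : Finset T.Q).card = Ncard T := rfl
  have hcard : (Finset.univ : Finset T.Q).card < (Finset.range (Ncard T + 1)).card := by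
    rw [Finset.card_range, hNc]; omega
  obtain ⟨i, hi, j, hj, hne, heq⟩ :=
    Finset.exists_ne_map_eq_of_card_lt_of_maps_to hcard
      (f := fun i => (psi T)^[i] q) (fun a _ => Finset.mem_univ _)
  simp only [Finset.mem_range] at hi hj
  have main : ∀ i j : ℕ, i < j → j < Ncard T + 1 → (psi T)^[i] q = (psi T)^[j] q →
      ∃ p, 1 ≤ p ∧ p ≤ Ncard T ∧
        (psi T)^[p] ((psi T)^[Ncard T] q) = (psi T)^[Ncard T] q := by
    intro i j hij hjN heq
    refine ⟨j - i, by omega, by omega, ?_⟩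
    have hu0 : (psi T)^[j-i] ((psi T)^[i] q) = (psi T)^[i] q := by
      rw [← Function.iterate_add_apply, show j - i + i = j by omega, heq]
    rw [show Ncard T = (Ncard T - i) + i by omega]
    rw [Function.iterate_add_apply, ← Function.iterate_add_apply,
      show j - i + (Ncard T - i) = (Ncard T - i) + (j - i) by ring,
      Function.iterate_add_apply, hu0]
  rcases lt_or_gt_of_ne hne with h | h
  · exact main i j h hj heq
  · exact main j i h hi heq.symm

lemma iterate_psi_mod (T : FST) (q : T.Q) {a b : ℕ}
    (ha : Ncard T ≤ a) (hb : Ncard T ≤ b)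
    (hab : a % Nat.factorial (Ncard T) = b % Nat.factorial (Ncard T)) :
    (psi T)^[a] q = (psi T)^[b] q := by
  have step1 : ∀ q : T.Q, ∀ c, Ncard T ≤ c →
      (psi T)^[c + Nat.factorial (Ncard T)] q = (psi T)^[c] q := by
    intro q c hc
    obtain ⟨p, hp1, hpN, hcyc⟩ := cycle_exists T q
    obtain ⟨t, ht⟩ : p ∣ Nat.factorial (Ncard T) := Nat.dvd_factorial hp1 hpN
    have hfix : (psi T)^[Nat.factorial (Ncard T)] ((psi T)^[Ncard T] q)
        = (psi T)^[Ncard T] q := by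
      rw [ht, mul_comm, iterate_fix_mul hcyc]
    obtain ⟨e, rfl⟩ := Nat.exists_eq_add_of_le hc
    rw [show Ncard T + e + Nat.factorial (Ncard T)
        = (e + Nat.factorial (Ncard T)) + Ncard T by ring,
      Function.iterate_add_apply, Function.iterate_add_apply, hfix,
      ← Function.iterate_add_apply, show e + Ncard T = Ncard T + e by ring]
  have main : ∀ a b : ℕ, a ≤ b → Ncard T ≤ a →
      a % Nat.factorial (Ncard T) = b % Nat.factorial (Ncard T) →
      (psi T)^[a] q = (psi T)^[b] q := by
    intro a b hab' haN hmod
    obtain ⟨t, ht⟩ : Nat.factorial (Ncard T) ∣ b - a :=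
      (Nat.modEq_iff_dvd' hab').1 hmod
    have hb' : b = a + Nat.factorial (Ncard T) * t := by omega
    subst hb'
    clear ht hab' hmod
    induction t with
    | zero => simp
    | succ t ih =>
      rw [show a + Nat.factorial (Ncard T) * (t+1)
          = (a + Nat.factorial (Ncard T) * t) + Nat.factorial (Ncard T)
          by ring, step1 _ _ (by omega), ih]
  rcases le_total a b with h | h
  · exact main a b h ha hab
  · exact (main b a h hb hab.symm).symm

section RunLemmas

variable (T : FST) (f : ℕ → ℕ)

lemma stateAt_run (k i : ℕ) (hi : i ≤ f k) :
    T.stateAt (seqOf f) (posF f k + 1 + i)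
      = (psi T)^[i] (T.step (T.stateAt (seqOf f) (posF f k)) true) := by
  induction i with
  | zero =>
    have : T.stateAt (seqOf f) (posF f k + 1)
        = T.step (T.stateAt (seqOf f) (posF f k)) (seqOf f (posF f k)) := rfl
    rw [show posF f k + 1 + 0 = posF f k + 1 by ring, this, seqOf_posF]
    simp
  | succ i ih =>
    have hfalse : seqOf f (posF f k + 1 + i) = false :=
      seqOf_false (k := k) (by omega) (by rw [posF_succ]; omega)
    have : T.stateAt (seqOf f) (posF f k + 1 + (i+1))
        = T.step (T.stateAt (seqOf f) (posF f k + 1 + i)) (seqOf f (posF f k + 1 + i)) := rfl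
    rw [this, hfalse, ih (by omega), Function.iterate_succ_apply']
    rfl

lemma outPrefix_run (k a : ℕ) (ha : a ≤ f k) :
    T.outPrefix (seqOf f) (posF f k + 1 + a)
      = T.outPrefix (seqOf f) (posF f k + 1)
        ++ outsZ T (T.step (T.stateAt (seqOf f) (posF f k)) true) a := by
  induction a with
  | zero => simp [outsZ]
  | succ a ih =>
    have hfalse : seqOf f (posF f k + 1 + a) = false :=
      seqOf_false (k := k) (by omega) (by rw [posF_succ]; omega)
    rw [show posF f k + 1 + (a+1) = (posF f k + 1 + a) + 1 by ring, outPrefix_succ,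
      ih (by omega), outsZ_succ, List.append_assoc]
    congr 2
    rw [stateAt_run T f k a (by omega), hfalse]

end RunLemmas

lemma falseRun {a ℓ : ℕ} (h : ∀ j < ℓ, seqOf (fun n => 2^n) (a + j) = false) :
    ℓ ≤ a + 2 := by
  obtain ⟨m, hm1, hm2⟩ := exists_block (fun n => 2^n) a
  have hend : a + ℓ ≤ posF (fun n => 2^n) (m+1) := by
    by_contra hcon
    push_neg at hcon
    have hj := h (posF (fun n => 2^n) (m+1) - a) (by omega)
    rw [show a + (posF (fun n => 2^n) (m+1) - a) = posF (fun n => 2^n) (m+1) by omega,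
      seqOf_posF] at hj
    exact absurd hj (by simp)
  have hsum : (∑ i ∈ Finset.range m, 2^i) + 1 = 2^m := sum_two_pow m
  have h1 : posF (fun n => 2^n) (m+1) = posF (fun n => 2^n) m + 1 + 2^m := posF_succ _ m
  have h2 : 2^m ≤ posF (fun n => 2^n) m + 1 := by
    simp only [posF]; omega
  omega

end TwoPow
namespace TwoPow

def fs : ℕ → ℕ := fun n => 2 ^ (2 * n)
def ft : ℕ → ℕ := fun n => 2 ^ n

lemma fs_succ (n : ℕ) : fs (n+1) = 4 * fs n := by
  show 2 ^ (2*(n+1)) = 4 * 2 ^ (2*n)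
  rw [show 2*(n+1) = 2*n + 2 by ring, pow_add]; ring

lemma lt_fs (n : ℕ) : n < fs n :=
  lt_of_lt_of_le (Nat.lt_two_pow_self (n := n)) (pow_le_pow_right₀ one_le_two (by omega))

lemma fs_eq (k : ℕ) : fs k = 2^k * 2^k := by
  show 2 ^ (2*k) = 2^k * 2^k
  rw [two_mul, pow_add]

def Dd (T : FST) : ℕ :=
  (@Finset.univ T.Q T.fin).sup (fun q => max (T.out q false).length (T.out q true).length)

lemma out_le_Dd (T : FST) : ∀ q b, (T.out q b).length ≤ Dd T := by
  intro q b
  have h : max (T.out q false).length (T.out q true).length ≤ Dd T := by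
    show _ ≤ (@Finset.univ T.Q T.fin).sup
      (fun q => max (T.out q false).length (T.out q true).length)
    exact Finset.le_sup (f := fun q => max (T.out q false).length (T.out q true).length)
      (@Finset.mem_univ _ T.fin q)
  cases b
  · exact le_trans (le_max_left _ _) h
  · exact le_trans (le_max_right _ _) h

lemma ncard_pos (T : FST) : 1 ≤ Ncard T := @Fintype.card_pos _ T.fin ⟨T.q0⟩

def qst (T : FST) (k : ℕ) : T.Q := T.stateAt (seqOf fs) (posF fs k)
def qrun (T : FST) (k : ℕ) : T.Q := T.step (qst T k) true
def uu (T : FST) (k : ℕ) : T.Q := (psi T)^[Ncard T] (qrun T k)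
def cc (T : FST) (k : ℕ) : ℕ := (T.outPrefix (seqOf fs) (posF fs k)).length

lemma cc_mono (T : FST) {k k' : ℕ} (h : k ≤ k') : cc T k ≤ cc T k' :=
  length_outPrefix_mono T _ ((posF_strictMono fs).monotone h)

lemma key1 (T : FST) {k : ℕ} (hk : Ncard T ≤ fs k) :
    T.outPrefix (seqOf fs) (posF fs (k+1))
      = T.outPrefix (seqOf fs) (posF fs k + 1 + Ncard T)
        ++ outsZ T (uu T k) (fs k - Ncard T) := by
  obtain ⟨e, he⟩ : ∃ e, fs k = Ncard T + e := ⟨fs k - Ncard T, by omega⟩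
  rw [posF_succ, he, show Ncard T + e - Ncard T = e by omega,
    outPrefix_run T fs k (Ncard T + e) (le_of_eq he.symm), outsZ_add,
    ← List.append_assoc, ← outPrefix_run T fs k (Ncard T) hk]
  rfl

lemma a1_le (T : FST) (k : ℕ) :
    (T.outPrefix (seqOf fs) (posF fs k + 1 + Ncard T)).length
      ≤ cc T k + Dd T * (Ncard T + 1) := by
  have := length_outPrefix_le T (seqOf fs) (out_le_Dd T) (posF fs k) (1 + Ncard T)
  rw [show posF fs k + (1 + Ncard T) = posF fs k + 1 + Ncard T by ring] at this
  exact le_trans this (by rw [show Dd T * (Ncard T + 1) = Dd T * (1 + Ncard T) by ring]; rfl)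

lemma no_true (T : FST)
    (ho : ∀ n j, j < (T.outPrefix (seqOf fs) n).length →
      (T.outPrefix (seqOf fs) n).getD j false = seqOf ft j)
    (k p : ℕ) (hp1 : 1 ≤ p) (hpN : p ≤ Ncard T) (hcyc : (psi T)^[p] (uu T k) = uu T k)
    (hbig : 2 * Ncard T * Ncard T * Dd T + 3 * Ncard T + 1 ≤ fs k) :
    ∀ x ∈ outsZ T (uu T k) p, x = false := by
  by_contra hcon
  push_neg at hcon
  obtain ⟨x, hx, hxne⟩ := hcon
  have hxt : x = true := by cases x <;> simp_all
  subst hxt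
  -- basic abbreviations
  have hN1 : 1 ≤ Ncard T := ncard_pos T
  have h3N : 3 * Ncard T ≤ fs k :=
    le_trans (le_trans (Nat.le_add_left _ _) (Nat.le_add_right _ 1)) hbig
  have hNfs : Ncard T ≤ fs k := by omega
  obtain ⟨j0, hj0lt, hj0⟩ := List.getElem_of_mem hx
  have hL1 : 1 ≤ (outsZ T (uu T k) p).length := by
    rcases Nat.eq_zero_or_pos (outsZ T (uu T k) p).length with h | h
    · rw [List.length_eq_zero_iff] at h; simp [h] at hx
    · exact h
  have hLD : (outsZ T (uu T k) p).length ≤ Dd T * Ncard T :=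
    le_trans (outsZ_length_le T _ (out_le_Dd T) p) (Nat.mul_le_mul_left _ hpN)
  set L := (outsZ T (uu T k) p).length with hLdef
  set m := (fs k - Ncard T) / p with hmdef
  have hm2 : 2 ≤ m := by
    rw [hmdef, Nat.le_div_iff_mul_le hp1]
    omega
  have hmp : m * p ≤ fs k - Ncard T := Nat.div_mul_le_self _ _
  -- the trues
  have htrue : ∀ i, i < m →
      seqOf ft ((T.outPrefix (seqOf fs) (posF fs k + 1 + Ncard T)).length
        + (i * L + j0)) = true := by
    intro i hi
    have hi1 : (i+1) * p ≤ fs k - Ncard T :=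
      le_trans (Nat.mul_le_mul_right p hi) hmp
    have hrep : outsZ T (uu T k) ((i+1)*p)
        = outsZ T (uu T k) (i*p) ++ outsZ T (uu T k) p := by
      rw [show (i+1)*p = i*p + p by ring, outsZ_add, iterate_fix_mul hcyc]
    have hleni : (outsZ T (uu T k) (i*p)).length = i * L := outsZ_cycle_len T hcyc i
    have hsplit : outsZ T (uu T k) (fs k - Ncard T)
        = outsZ T (uu T k) ((i+1)*p)
          ++ outsZ T ((psi T)^[(i+1)*p] (uu T k)) ((fs k - Ncard T) - (i+1)*p) := by
      rw [← outsZ_add, show (i+1)*p + ((fs k - Ncard T) - (i+1)*p) = fs k - Ncard T by omega]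
    have hidxlt : i * L + j0 < (outsZ T (uu T k) ((i+1)*p)).length := by
      rw [hrep, List.length_append, hleni]; omega
    have hgd : (outsZ T (uu T k) (fs k - Ncard T)).getD (i * L + j0) false = true := by
      rw [hsplit, List.getD_append _ _ _ _ hidxlt, hrep,
        List.getD_append_right _ _ _ _ (by rw [hleni]; omega)]
      rw [hleni, show i * L + j0 - i * L = j0 by omega]
      rw [List.getD_eq_getElem _ _ hj0lt, hj0]
    have hidxlt2 : i * L + j0 < (outsZ T (uu T k) (fs k - Ncard T)).length :=
      lt_of_lt_of_le hidxlt (outsZ_length_mono T _ hi1)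
    have hfull : i * L + j0 + (T.outPrefix (seqOf fs) (posF fs k + 1 + Ncard T)).length
        < (T.outPrefix (seqOf fs) (posF fs (k+1))).length := by
      rw [key1 T hNfs, List.length_append]; omega
    have := ho (posF fs (k+1))
      ((T.outPrefix (seqOf fs) (posF fs k + 1 + Ncard T)).length + (i * L + j0))
      (by omega)
    rw [← this, key1 T hNfs,
      List.getD_append_right _ _ _ _ (by omega),
      show (T.outPrefix (seqOf fs) (posF fs k + 1 + Ncard T)).length + (i * L + j0)
        - (T.outPrefix (seqOf fs) (posF fs k + 1 + Ncard T)).length = i * L + j0 by omega,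
      hgd]
  -- two consecutive trues
  set a1 := (T.outPrefix (seqOf fs) (posF fs k + 1 + Ncard T)).length with ha1def
  have ht1 := htrue (m-2) (by omega)
  have ht2 := htrue (m-1) (by omega)
  obtain ⟨jx, hjx⟩ := (seqOf_true_iff ft _).1 ht1
  obtain ⟨jy, hjy⟩ := (seqOf_true_iff ft _).1 ht2
  have hyx : a1 + ((m-1)*L + j0) = a1 + ((m-2)*L + j0) + L := by
    have : (m-1)*L = (m-2)*L + L := by
      rw [show m - 1 = (m-2) + 1 by omega, Nat.succ_mul]
    omega
  have hjxy : jx < jy := by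
    by_contra hle
    push_neg at hle
    have := (posF_strictMono ft).monotone hle
    omega
  have hstep : posF ft (jx+1) ≤ posF ft jy := (posF_strictMono ft).monotone hjxy
  have hgap : posF ft (jx+1) = posF ft jx + 1 + 2^jx := posF_succ ft jx
  have h2jx : 2^jx < L := by omega
  have hxval : posF ft jx = jx + ∑ i ∈ Finset.range jx, 2^i := rfl
  have hsum := sum_two_pow jx
  have hjxlt := Nat.lt_two_pow_self (n := jx)
  -- x < 2*D*N and x ≥ m - 2
  have hxlarge : m - 2 ≤ posF ft jx := by
    have : m - 2 ≤ (m-2) * L := Nat.le_mul_of_pos_right _ (by omega)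
    omega
  have hxsmall : posF ft jx < 2 * (Dd T * Ncard T) := by omega
  have hmlt : m < 2 * (Dd T * Ncard T) + 2 := by omega
  -- final size contradiction
  have hdm : p * m + (fs k - Ncard T) % p = fs k - Ncard T := Nat.div_add_mod _ _
  have hrem : (fs k - Ncard T) % p < p := Nat.mod_lt _ (by omega)
  have h1 : p * m + p ≤ Ncard T * m + Ncard T := by
    have := Nat.mul_le_mul_right m hpN; omega
  have h2 : Ncard T * m ≤ Ncard T * (2 * (Dd T * Ncard T) + 1) := by
    exact Nat.mul_le_mul_left _ (by omega)
  have h3 : Ncard T * (2 * (Dd T * Ncard T) + 1) = 2 * Ncard T * Ncard T * Dd T + Ncard T := by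
    ring
  omega

end TwoPow
namespace TwoPow

lemma iterate_mod_cycle (T : FST) {u : T.Q} {p : ℕ} (hp1 : 1 ≤ p)
    (hcyc : (psi T)^[p] u = u) (i : ℕ) :
    (psi T)^[i] u = (psi T)^[i % p] u := by
  conv_lhs => rw [← Nat.mod_add_div' i p]
  rw [Function.iterate_add_apply, iterate_fix_mul hcyc]

lemma all_false (T : FST) {u : T.Q} {p : ℕ} (hp1 : 1 ≤ p) (hcyc : (psi T)^[p] u = u)
    (hfO : ∀ x ∈ outsZ T u p, x = false) :
    ∀ a, ∀ x ∈ outsZ T u a, x = false := by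
  intro a x hx
  rw [mem_outsZ] at hx
  obtain ⟨i, hi, hx⟩ := hx
  rw [iterate_mod_cycle T hp1 hcyc i] at hx
  exact hfO x (mem_outsZ.2 ⟨i % p, Nat.mod_lt _ (by omega), hx⟩)

lemma all_empty (T : FST) {u : T.Q} {p : ℕ} (hp1 : 1 ≤ p) (hcyc : (psi T)^[p] u = u)
    (hO : outsZ T u p = []) : ∀ a, outsZ T u a = [] := by
  have h1 : ∀ l ∈ (List.range p).map (fun i => T.out ((psi T)^[i] u) false), l = [] :=
    List.flatten_eq_nil_iff.1 hO
  have hev : ∀ i, T.out ((psi T)^[i] u) false = [] := by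
    intro i
    rw [iterate_mod_cycle T hp1 hcyc i]
    exact h1 _ (List.mem_map_of_mem (List.mem_range.2 (Nat.mod_lt _ (by omega))))
  intro a
  show ((List.range a).map fun i => T.out ((psi T)^[i] u) false).flatten = []
  rw [List.flatten_eq_nil_iff]
  intro l hl
  obtain ⟨i, -, rfl⟩ := List.mem_map.1 hl
  exact hev i

lemma block_est (T : FST)
    (ho : ∀ n j, j < (T.outPrefix (seqOf fs) n).length →
      (T.outPrefix (seqOf fs) n).getD j false = seqOf ft j)
    (k p : ℕ) (hp1 : 1 ≤ p) (hpN : p ≤ Ncard T) (hcyc : (psi T)^[p] (uu T k) = uu T k)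
    (hNk : Ncard T ≤ fs k)
    (hfO : ∀ x ∈ outsZ T (uu T k) p, x = false) :
    cc T (k+1) ≤ 2 * cc T k + (2 * (Dd T * (Ncard T + 1)) + 2) ∧
    (outsZ T (uu T k) p ≠ [] →
      fs k ≤ Ncard T * cc T k + (Ncard T * (Dd T * (Ncard T + 1) + 2) + 2 * Ncard T)) := by
  have hall : ∀ a, ∀ x ∈ outsZ T (uu T k) a, x = false := all_false T hp1 hcyc hfO
  have hsplit := key1 T hNk
  set a1 := (T.outPrefix (seqOf fs) (posF fs k + 1 + Ncard T)).length with ha1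
  set ℓ := (outsZ T (uu T k) (fs k - Ncard T)).length with hℓ
  have hcc1 : cc T (k+1) = a1 + ℓ := by
    show (T.outPrefix (seqOf fs) (posF fs (k+1))).length = _
    rw [hsplit, List.length_append]
  have htf : ∀ j, j < ℓ → seqOf ft (a1 + j) = false := by
    intro j hj
    have hidx : a1 + j < (T.outPrefix (seqOf fs) (posF fs (k+1))).length := by
      rw [hsplit, List.length_append]; omega
    have h1 := ho (posF fs (k+1)) (a1 + j) hidx
    rw [hsplit, List.getD_append_right _ _ _ _ (by omega),
      show a1 + j - a1 = j by omega] at h1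
    rw [← h1, List.getD_eq_getElem _ _ hj]
    exact hall _ _ (List.getElem_mem _)
  have hflen : ℓ ≤ a1 + 2 := falseRun htf
  have ha1b := a1_le T k
  rw [← ha1] at ha1b
  constructor
  · omega
  · intro hne
    have hL1 : 1 ≤ (outsZ T (uu T k) p).length := by
      rcases Nat.eq_zero_or_pos (outsZ T (uu T k) p).length with h | h
      · rw [List.length_eq_zero_iff] at h; exact absurd h hne
      · exact h
    set m := (fs k - Ncard T) / p with hmdef
    have hmp : m * p ≤ fs k - Ncard T := Nat.div_mul_le_self _ _
    have hml : m ≤ ℓ := by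
      have h1 : (outsZ T (uu T k) (m*p)).length = m * (outsZ T (uu T k) p).length :=
        outsZ_cycle_len T hcyc m
      have h2 := outsZ_length_mono T (uu T k) hmp
      have h3 : m ≤ m * (outsZ T (uu T k) p).length := Nat.le_mul_of_pos_right _ hL1
      omega
    have hdm : p * m + (fs k - Ncard T) % p = fs k - Ncard T := Nat.div_add_mod _ _
    have hrem : (fs k - Ncard T) % p < p := Nat.mod_lt _ (by omega)
    have h1 : p * m + p ≤ Ncard T * m + Ncard T := by
      have := Nat.mul_le_mul_right m hpN; omega
    have h2 : Ncard T * m ≤ Ncard T * (cc T k + Dd T * (Ncard T + 1) + 2) :=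
      Nat.mul_le_mul_left _ (by omega)
    have h3 : Ncard T * (cc T k + Dd T * (Ncard T + 1) + 2)
        = Ncard T * cc T k + (Ncard T * (Dd T * (Ncard T + 1) + 2)) := by ring
    omega

end TwoPow
namespace TwoPow

theorem neg_main : ¬ Ge (seqOf fs) (seqOf ft) := by
  rintro ⟨T, htend, ho⟩
  have hN1 : 1 ≤ Ncard T := ncard_pos T
  choose p hp1 hpN hcyc using fun k => cycle_exists T (qrun T k)
  have hqrun_eq : ∀ k k', qst T k = qst T k' → qrun T k = qrun T k' :=
    fun _ _ h => congrArg (fun q => T.step q true) h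
  set K0 := 2 * Ncard T * Ncard T * Dd T + 3 * Ncard T + 1 + Ncard T with hK0def
  have hK0 : ∀ k, K0 ≤ k →
      2 * Ncard T * Ncard T * Dd T + 3 * Ncard T + 1 ≤ fs k ∧ Ncard T ≤ fs k := by
    intro k hk
    have hf := lt_fs k
    constructor <;> omega
  have hNoTrue : ∀ k, K0 ≤ k → ∀ x ∈ outsZ T (uu T k) (p k), x = false :=
    fun k hk => no_true T ho k (p k) (hp1 k) (hpN k) (hcyc k) (hK0 k hk).1
  have hblock : ∀ k, K0 ≤ k →
      cc T (k+1) ≤ 2 * cc T k + (2 * (Dd T * (Ncard T + 1)) + 2) ∧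
      (outsZ T (uu T k) (p k) ≠ [] →
        fs k ≤ Ncard T * cc T k + (Ncard T * (Dd T * (Ncard T + 1) + 2) + 2 * Ncard T)) :=
    fun k hk => block_est T ho k (p k) (hp1 k) (hpN k) (hcyc k) (hK0 k hk).2 (hNoTrue k hk)
  by_cases hC : ∀ K, ∃ k, K ≤ k ∧ outsZ T (uu T k) (p k) ≠ []
  · -- Case 1 : infinitely many blocks with productive cycles
    have hgrow : ∀ d, cc T (K0 + d) + (2 * (Dd T * (Ncard T + 1)) + 2)
        ≤ 2^d * (cc T K0 + 2 * (2 * (Dd T * (Ncard T + 1)) + 2)) := by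
      intro d
      induction d with
      | zero => simp only [Nat.add_zero, pow_zero, one_mul]; omega
      | succ d ih =>
        have hb := (hblock (K0+d) (by omega)).1
        have h2 : (2:ℕ)^(d+1) * (cc T K0 + 2 * (2 * (Dd T * (Ncard T + 1)) + 2))
            = 2 * (2^d * (cc T K0 + 2 * (2 * (Dd T * (Ncard T + 1)) + 2))) := by ring
        rw [show K0 + (d+1) = (K0+d)+1 by ring]
        omega
    obtain ⟨B2, hB2⟩ : ∃ x, x = cc T K0 + 2 * (2 * (Dd T * (Ncard T + 1)) + 2) := ⟨_, rfl⟩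
    obtain ⟨C3, hC3⟩ : ∃ x, x = Ncard T * (Dd T * (Ncard T + 1) + 2) + 2 * Ncard T := ⟨_, rfl⟩
    obtain ⟨k, hk, hne⟩ := hC (max K0 (Ncard T * B2 + C3))
    have hkK0 : K0 ≤ k := le_trans (le_max_left _ _) hk
    have hkmax : Ncard T * B2 + C3 ≤ k := le_trans (le_max_right _ _) hk
    have hlow : fs k ≤ Ncard T * cc T k + C3 := by
      rw [hC3]; exact (hblock k hkK0).2 hne
    have hup : cc T k ≤ 2^(k-K0) * B2 := by
      have h := hgrow (k - K0)
      rw [show K0 + (k - K0) = k by omega] at h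
      rw [hB2]; omega
    have h1 : cc T k ≤ 2^k * B2 :=
      le_trans hup (Nat.mul_le_mul_right _ (Nat.pow_le_pow_right (by omega) (by omega)))
    have h3 : Ncard T * B2 + C3 < 2^k := lt_of_le_of_lt hkmax (Nat.lt_two_pow_self (n := k))
    have hfinal : fs k < fs k := by
      calc fs k ≤ Ncard T * cc T k + C3 := hlow
        _ ≤ Ncard T * (2^k * B2) + C3 :=
            Nat.add_le_add_right (Nat.mul_le_mul_left _ h1) _
        _ = 2^k * (Ncard T * B2) + C3 := by ring
        _ ≤ 2^k * (Ncard T * B2) + 2^k * C3 := by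
            refine Nat.add_le_add_left ?_ _
            calc C3 = 1 * C3 := (one_mul _).symm
              _ ≤ 2^k * C3 := Nat.mul_le_mul_right _ Nat.one_le_two_pow
        _ = 2^k * (Ncard T * B2 + C3) := by ring
        _ < 2^k * 2^k := (mul_lt_mul_iff_right₀ (show 0 < 2^k by positivity)).2 h3
        _ = fs k := (fs_eq k).symm
    omega
  · -- Case 2 : eventually all cycles output nothing
    push_neg at hC
    obtain ⟨K, hK⟩ := hC
    set K1 := max K K0 with hK1def
    have hemp : ∀ k, K1 ≤ k → ∀ a, outsZ T (uu T k) a = [] := fun k hk =>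
      all_empty T (hp1 k) (hcyc k) (hK k (le_trans (le_max_left _ _) hk))
    have hNfs : ∀ k, K1 ≤ k → Ncard T ≤ fs k := fun k hk =>
      (hK0 k (le_trans (le_max_right _ _) hk)).2
    have hW : ∀ k, K1 ≤ k → T.outPrefix (seqOf fs) (posF fs (k+1))
        = T.outPrefix (seqOf fs) (posF fs k)
          ++ (T.out (qst T k) true ++ outsZ T (qrun T k) (Ncard T)) := by
      intro k hk
      rw [key1 T (hNfs k hk), hemp k hk, List.append_nil,
        outPrefix_run T fs k (Ncard T) (hNfs k hk), outPrefix_succ, seqOf_posF,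
        List.append_assoc]
      rfl
    have hqrec : ∀ k, qst T (k+1) = (psi T)^[fs k] (qrun T k) := by
      intro k
      show T.stateAt (seqOf fs) (posF fs (k+1)) = _
      rw [posF_succ]
      exact stateAt_run T fs k (fs k) le_rfl
    have hM1 : 1 ≤ Nat.factorial (Ncard T) := Nat.factorial_pos _
    obtain ⟨r, k0, hr1, hmodper⟩ :
        ∃ r k0, 1 ≤ r ∧ ∀ k, k0 ≤ k →
          fs (k + r) % Nat.factorial (Ncard T) = fs k % Nat.factorial (Ncard T) := by
      have hmaps : ∀ a ∈ Finset.range (Nat.factorial (Ncard T) + 1),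
          fs a % Nat.factorial (Ncard T) ∈ Finset.range (Nat.factorial (Ncard T)) := by
        intro a _
        exact Finset.mem_range.2 (Nat.mod_lt _ (by omega))
      obtain ⟨i, hi, j, hj, hne, heq⟩ :=
        Finset.exists_ne_map_eq_of_card_lt_of_maps_to (by simp) hmaps
      simp only [Finset.mem_range] at hi hj
      have main : ∀ i j : ℕ, i < j →
          fs i % Nat.factorial (Ncard T) = fs j % Nat.factorial (Ncard T) →
          ∃ r k0, 1 ≤ r ∧ ∀ k, k0 ≤ k →
            fs (k + r) % Nat.factorial (Ncard T) = fs k % Nat.factorial (Ncard T) := by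
        intro i j hij heq
        refine ⟨j - i, i, by omega, ?_⟩
        have claim : ∀ d, fs (i + d + (j - i)) % Nat.factorial (Ncard T)
            = fs (i + d) % Nat.factorial (Ncard T) := by
          intro d
          induction d with
          | zero =>
            rw [show i + 0 + (j - i) = j by omega, show i + 0 = i by omega]
            exact heq.symm
          | succ d ih =>
            rw [show i + (d+1) + (j-i) = (i + d + (j-i)) + 1 by omega,
              show i + (d+1) = (i+d)+1 by omega, fs_succ, fs_succ]
            exact Nat.ModEq.mul_left 4 ih
        intro k hk
        have h := claim (k - i)
        rw [show i + (k - i) = k by omega] at h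
        exact h
      rcases lt_or_gt_of_ne hne with h | h
      · exact main i j h heq
      · exact main j i h heq.symm
    -- pigeonhole on pairs (state at block start, block index mod r)
    have hper : ∃ k2 P, 1 ≤ P ∧ max K1 k0 ≤ k2 ∧ r ∣ P ∧ qst T (k2 + P) = qst T k2 := by
      have hcard : ((@Finset.univ T.Q T.fin) ×ˢ Finset.range r).card
          < (Finset.range (Ncard T * r + 1)).card := by
        have h : (@Finset.univ T.Q T.fin).card = Ncard T := rfl
        rw [Finset.card_product, h, Finset.card_range, Finset.card_range]
        omega
      obtain ⟨i, hi, i', hi', hnei, heqi⟩ :=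
        Finset.exists_ne_map_eq_of_card_lt_of_maps_to hcard
          (f := fun i => (qst T (max K1 k0 + i), (max K1 k0 + i) % r))
          (fun a _ => Finset.mem_product.2 ⟨@Finset.mem_univ _ T.fin _,
            Finset.mem_range.2 (Nat.mod_lt _ (by omega))⟩)
      have main : ∀ i i' : ℕ, i < i' →
          (qst T (max K1 k0 + i), (max K1 k0 + i) % r)
            = (qst T (max K1 k0 + i'), (max K1 k0 + i') % r) →
          ∃ k2 P, 1 ≤ P ∧ max K1 k0 ≤ k2 ∧ r ∣ P ∧ qst T (k2 + P) = qst T k2 := by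
        intro i i' hii' heq
        rw [Prod.mk.injEq] at heq
        obtain ⟨h1, h2⟩ := heq
        refine ⟨max K1 k0 + i, i' - i, by omega, by omega, ?_, ?_⟩
        · have hdvd : r ∣ (max K1 k0 + i') - (max K1 k0 + i) :=
            (Nat.modEq_iff_dvd' (by omega)).1 h2
          rw [show max K1 k0 + i' - (max K1 k0 + i) = i' - i by omega] at hdvd
          exact hdvd
        · rw [show max K1 k0 + i + (i' - i) = max K1 k0 + i' by omega]
          exact h1.symm
      rcases lt_or_gt_of_ne hnei with h | h
      · exact main i i' h heqi
      · exact main i' i h heqi.symm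
    obtain ⟨k2, P, hP1, hk2ge, hrP, hqP⟩ := hper
    have hk2K1 : K1 ≤ k2 := le_trans (le_max_left _ _) hk2ge
    have hk2k0 : k0 ≤ k2 := le_trans (le_max_right _ _) hk2ge
    have hfP : ∀ k, k0 ≤ k →
        fs (k + P) % Nat.factorial (Ncard T) = fs k % Nat.factorial (Ncard T) := by
      obtain ⟨t, rfl⟩ := hrP
      have claim : ∀ t k, k0 ≤ k →
          fs (k + r * t) % Nat.factorial (Ncard T) = fs k % Nat.factorial (Ncard T) := by
        intro t
        induction t with
        | zero => intro k hk; simp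
        | succ t ih =>
          intro k hk
          rw [show k + r * (t+1) = (k + r * t) + r by ring, hmodper _ (by omega)]
          exact ih k hk
      exact claim t
    have hqper : ∀ d, qst T (k2 + d + P) = qst T (k2 + d) := by
      intro d
      induction d with
      | zero => simpa using hqP
      | succ d ih =>
        have h1 : Ncard T ≤ fs (k2 + d + P) := hNfs _ (by omega)
        have h2 : Ncard T ≤ fs (k2 + d) := hNfs _ (by omega)
        have h3 := hfP (k2 + d) (by omega)
        calc qst T (k2 + (d+1) + P) = qst T ((k2 + d + P) + 1) := by
              rw [show k2 + (d+1) + P = (k2 + d + P) + 1 by ring]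
          _ = (psi T)^[fs (k2 + d + P)] (qrun T (k2 + d + P)) := hqrec _
          _ = (psi T)^[fs (k2 + d)] (qrun T (k2 + d)) := by
              rw [hqrun_eq _ _ ih]
              exact iterate_psi_mod T _ h1 h2 h3
          _ = qst T (k2 + (d+1)) := by
              rw [show k2 + (d+1) = (k2 + d) + 1 by ring]
              exact (hqrec _).symm
    have hqw : ∀ d, T.out (qst T (k2 + d + P)) true ++ outsZ T (qrun T (k2 + d + P)) (Ncard T)
        = T.out (qst T (k2 + d)) true ++ outsZ T (qrun T (k2 + d)) (Ncard T) := by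
      intro d
      rw [hqper d, hqrun_eq _ _ (hqper d)]
    set Mw : ℕ → List Bool :=
      fun d => (T.outPrefix (seqOf fs) (posF fs (k2 + d))).drop (cc T k2) with hMwdef
    have hMw1 : ∀ d, T.outPrefix (seqOf fs) (posF fs (k2 + d))
        = T.outPrefix (seqOf fs) (posF fs k2) ++ Mw d := by
      intro d
      obtain ⟨t, ht⟩ := outPrefix_prefix T (seqOf fs)
        ((posF_strictMono fs).monotone (Nat.le_add_right k2 d))
      have h2 : Mw d = t := by
        show (T.outPrefix (seqOf fs) (posF fs (k2 + d))).drop (cc T k2) = t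
        rw [← ht]
        exact List.drop_left
      rw [h2, ← ht]
    have hlen1 : ∀ d, cc T (k2 + d) = cc T k2 + (Mw d).length := by
      intro d
      have h := congrArg List.length (hMw1 d)
      rw [List.length_append] at h
      exact h
    have hMw0 : Mw 0 = [] := by
      show (T.outPrefix (seqOf fs) (posF fs (k2 + 0))).drop (cc T k2) = []
      rw [show k2 + 0 = k2 by ring]
      exact List.drop_length
    have hMwstep : ∀ d, Mw (d+1)
        = Mw d ++ (T.out (qst T (k2 + d)) true ++ outsZ T (qrun T (k2 + d)) (Ncard T)) := by
      intro d
      have h1 := hW (k2 + d) (by omega)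
      rw [show (k2 + d) + 1 = k2 + (d + 1) by ring] at h1
      rw [hMw1 (d+1), hMw1 d, List.append_assoc] at h1
      exact List.append_cancel_left h1
    have hMwper : ∀ d, Mw (d + P) = Mw P ++ Mw d := by
      intro d
      induction d with
      | zero => rw [show 0 + P = P by ring, hMw0, List.append_nil]
      | succ d ih =>
        rw [show d + 1 + P = (d + P) + 1 by ring, hMwstep (d+P),
          show k2 + (d + P) = k2 + d + P by ring, hqw d, ih, hMwstep d,
          List.append_assoc]
    have hplen : (T.outPrefix (seqOf fs) (posF fs k2)).length = cc T k2 := rfl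
    have htau : ∀ d j, j < (Mw d).length → (Mw d).getD j false = seqOf ft (cc T k2 + j) := by
      intro d j hj
      have hidx : cc T k2 + j < (T.outPrefix (seqOf fs) (posF fs (k2 + d))).length := by
        have h := hlen1 d
        have h2 : (T.outPrefix (seqOf fs) (posF fs (k2 + d))).length = cc T (k2 + d) := rfl
        omega
      have h1 := ho (posF fs (k2 + d)) (cc T k2 + j) hidx
      rw [hMw1 d, List.getD_append_right _ _ _ _ (by omega),
        hplen, show cc T k2 + j - cc T k2 = j by omega] at h1
      exact h1
    have hper2 : ∀ t, (∃ d, t < (Mw d).length) →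
        seqOf ft (cc T k2 + (t + (Mw P).length)) = seqOf ft (cc T k2 + t) := by
      rintro t ⟨d, hd⟩
      have hlen2 : (Mw (d + P)).length = (Mw P).length + (Mw d).length := by
        rw [hMwper d, List.length_append]
      have h1 := htau (d + P) (t + (Mw P).length) (by omega)
      rw [hMwper d, List.getD_append_right _ _ _ _ (by omega),
        show t + (Mw P).length - (Mw P).length = t by omega] at h1
      have h2 := htau d t hd
      rw [← h1, ← h2]
    rw [Filter.tendsto_atTop] at htend
    have hbig2 : ∀ X, ∃ d, X < (Mw d).length := by
      intro X
      obtain ⟨n0, hn0⟩ := Filter.eventually_atTop.1 (htend (cc T k2 + X + 1))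
      refine ⟨max n0 k2 - k2, ?_⟩
      have h1 : cc T k2 + X + 1 ≤ cc T (max n0 k2) :=
        hn0 (posF fs (max n0 k2)) (le_trans (le_max_left _ _) (self_le_posF fs _))
      have h2 := hlen1 (max n0 k2 - k2)
      rw [show k2 + (max n0 k2 - k2) = max n0 k2 by omega] at h2
      omega
    rcases Nat.eq_zero_or_pos (Mw P).length with hs | hs
    · -- empty period: output stalls, contradicting unboundedness
      have hMP : Mw P = [] := List.length_eq_zero_iff.1 hs
      have hz : ∀ t, (Mw (t * P)).length = 0 := by
        intro t
        induction t with
        | zero => rw [show 0 * P = 0 by ring, hMw0]; rfl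
        | succ t ih =>
          rw [show (t+1) * P = t * P + P by ring, hMwper, hMP]
          simpa using ih
      obtain ⟨d, hd⟩ := hbig2 0
      have hdP : d ≤ d * P := Nat.le_mul_of_pos_right _ hP1
      have h3 : cc T (k2 + d) ≤ cc T (k2 + d * P) := cc_mono T (by omega)
      have h4 := hlen1 d
      have h5 := hlen1 (d * P)
      rw [hz (d : ℕ)] at h5
      omega
    · -- nonempty period: the tail of τ would be periodic
      set m1 := cc T k2 + (Mw P).length with hm1def
      have hpos : m1 ≤ posF ft m1 := self_le_posF ft m1
      obtain ⟨d, hd⟩ := hbig2 (posF ft m1 - cc T k2)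
      have h1 := hper2 (posF ft m1 - cc T k2) ⟨d, hd⟩
      have e1 : cc T k2 + (posF ft m1 - cc T k2 + (Mw P).length)
          = posF ft m1 + (Mw P).length := by omega
      have e2 : cc T k2 + (posF ft m1 - cc T k2) = posF ft m1 := by omega
      rw [e1, e2, seqOf_posF] at h1
      have hm2 : (Mw P).length ≤ 2 ^ m1 := by
        have h := Nat.lt_two_pow_self (n := m1)
        omega
      have hfalse : seqOf ft (posF ft m1 + (Mw P).length) = false := by
        refine seqOf_false (k := m1) (by omega) ?_
        rw [posF_succ]
        have hft : ft m1 = 2 ^ m1 := rfl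
        omega
      rw [hfalse] at h1
      exact absurd h1 (by simp)

end TwoPow

/-- `⟨2^(2n)⟩` is a transduct of `⟨2^n⟩`, but not conversely; hence
`⟨2^n⟩ > ⟨2^(2n)⟩` strictly in the transducibility order. -/
theorem two_pow_strict :
    Ge (seqOf fun n => 2 ^ n) (seqOf fun n => 2 ^ (2 * n)) ∧
    ¬ Ge (seqOf fun n => 2 ^ (2 * n)) (seqOf fun n => 2 ^ n) := by
  constructor
  · exact TwoPow.ge_double (fun n => 2 ^ n)
  · exact TwoPow.neg_main
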